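/- For every nonzero Lie element f of the free associative algebra k⟨X⟩ (i.e., f lies in the Lie subalgebra generated by X under commutators), the leading associative monomial of f with respect to the deg-lex order is an associative Lyndon–Shirshov word. -/

import Mathlib

noncomputable section

variable {X : Type*} [LinearOrder X] (k : Type*) [Field k]

def llt : List X → List X → Prop
  | [], _ => False
  | _ :: _, [] => True
  | a :: u, b :: v => a < b ∨ (a = b ∧ llt u v)

def IsLS (w : List X) : Prop :=
  w ≠ [] ∧ ∀ u v : List X, u ≠ [] → v ≠ [] → w = u ++ v → llt (v ++ u) w

/-- deg-lex order -/
def dlt (u v : List X) : Prop :=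
  u.length < v.length ∨ (u.length = v.length ∧ llt u v)

/-- the free associative algebra with basis the free monoid on X -/
abbrev FA (k : Type*) [Field k] (X : Type*) := MonoidAlgebra k (FreeMonoid X)

/-- the generators x ∈ X inside the free associative algebra -/
def gens : Set (FA k X) := Set.range fun x : X => MonoidAlgebra.single (FreeMonoid.of x) (1 : k)

/-- the leading (deg-lex maximal) monomial of f is w -/
def IsLeading (f : FA k X) (w : List X) : Prop :=
  f.coeff (FreeMonoid.ofList w) ≠ 0 ∧ ∀ v : List X, f.coeff (FreeMonoid.ofList v) ≠ 0 → v = w ∨ dlt v w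

/-- underlying associative word of a nonassociative word -/
def mword : FreeMagma X → List X
  | .of x => [x]
  | .mul a b => mword a ++ mword b

/-- evaluation of a nonassociative word in the free associative algebra
via the commutator bracket -/
def evalM : FreeMagma X → FA k X
  | .of x => MonoidAlgebra.single (FreeMonoid.of x) 1
  | .mul a b => evalM a * evalM b - evalM b * evalM a

/-- nonassociative Lyndon--Shirshov word -/
def IsNLS : FreeMagma X → Prop
  | .of _ => True
  | .mul a b => IsNLS a ∧ IsNLS b ∧ IsLS (mword a ++ mword b) ∧
      (match a with
        | .of _ => True
        | .mul _ a2 => ¬ llt (mword b) (mword a2))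

/-- standard bracketing tree: at each node the right factor is the longest
proper Lyndon--Shirshov suffix -/
def IsStd : FreeMagma X → Prop
  | .of _ => True
  | .mul a b => IsStd a ∧ IsStd b ∧ IsLS (mword a ++ mword b) ∧ IsLS (mword b) ∧
      ∀ s : List X, s ≠ [] → s ≠ mword a ++ mword b → s <:+ mword a ++ mword b →
        IsLS s → s.length ≤ (mword b).length

/-- flattening of a tree of trees -/
def mjoin : FreeMagma (FreeMagma X) → FreeMagma X
  | .of t => t
  | .mul a b => .mul (mjoin a) (mjoin b)

/-- the list of leaves of a binary tree -/
def leaves {α : Type*} : FreeMagma α → List α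
  | .of x => [x]
  | .mul a b => leaves a ++ leaves b

/-- `Occurs s t p` : `s` occurs as a subtree of `t` with exactly the word `p`
to its left -/
def Occurs (s : FreeMagma X) : FreeMagma X → List X → Prop
  | .of x, p => s = .of x ∧ p = []
  | .mul l r, p => (s = .mul l r ∧ p = []) ∨ Occurs s l p ∨
      ∃ q, Occurs s r q ∧ p = mword l ++ q

attribute [local instance 100] LieRing.ofAssociativeRing

/-!
Lie elements are spanned by the evaluations of nonassociative Lyndon–Shirshov (NLS) words. The
evaluation of an NLS word `t` has coefficient `1` at its associative word `mword t`, and all its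
other monomials are rearrangements of `mword t` that are lexicographically smaller. Distinct NLS
words have distinct associative words, so the leading monomial of a nonzero combination of NLS
evaluations is the largest `mword t` that occurs, and that word is Lyndon–Shirshov.

The spanning statement is Shirshov's rewriting: a bracket `[p, q]` of NLS words with `q < p` is
itself NLS unless `p = [p₁, p₂]` with `q < p₂`, and then the Jacobi identity
`[[p₁, p₂], q] = [p₁, [p₂, q]] + [[p₁, q], p₂]` expresses it through brackets that are smaller for
the lexicographic order on (length, rank of the word among its rearrangements, length of the left
factor).
-/

open OrderDual

/- `llt` is the lexicographic order in which a word is smaller than its proper prefixes, i.e. the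
order dual of Mathlib's lexicographic order on `List Xᵒᵈ`. -/
def lexKey (u : List X) : (List Xᵒᵈ)ᵒᵈ := toDual (u.map toDual)

theorem lexKey_injective {α : Type*} : Function.Injective (lexKey : List α → (List αᵒᵈ)ᵒᵈ) :=
  toDual.injective.comp (List.map_injective_iff.mpr toDual.injective)

theorem llt_iff_lexKey_lt : ∀ {u v : List X}, llt u v ↔ lexKey u < lexKey v
  | [], v => by simp [llt, lexKey]
  | _ :: _, [] => by simp [llt, lexKey]
  | a :: u, b :: v => by
    simp only [llt, lexKey, toDual_lt_toDual, List.map_cons, llt_iff_lexKey_lt (u := u) (v := v)]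
    rw [List.cons_lt_cons_iff, toDual_lt_toDual, toDual_inj, eq_comm]

theorem llt_irrefl (u : List X) : ¬ llt u u := by
  simp [llt_iff_lexKey_lt]

theorem llt_trans {u v w : List X} (h₁ : llt u v) (h₂ : llt v w) : llt u w := by
  rw [llt_iff_lexKey_lt] at *
  exact h₁.trans h₂

theorem llt_asymm {u v : List X} (h : llt u v) : ¬ llt v u := by
  rw [llt_iff_lexKey_lt] at *
  exact h.asymm

theorem llt_trichotomy (u v : List X) : llt u v ∨ u = v ∨ llt v u := by
  simpa only [llt_iff_lexKey_lt, lexKey_injective.eq_iff] using lt_trichotomy (lexKey u) (lexKey v)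

theorem llt_append_left_iff : ∀ (u : List X) {a b : List X}, llt (u ++ a) (u ++ b) ↔ llt a b
  | [], _, _ => Iff.rfl
  | x :: u, a, b => by simp [llt, llt_append_left_iff u]

theorem llt_append_of_not_isPrefix : ∀ {u v : List X}, llt u v → ¬ v <+: u → ∀ x y : List X,
    llt (u ++ x) (v ++ y)
  | [], _, h, _, _, _ => h.elim
  | _ :: _, [], _, hp, _, _ => absurd List.nil_prefix hp
  | a :: u, b :: v, h, hp, x, y => by
    rcases h with h | ⟨rfl, h⟩
    · exact Or.inl h
    · exact Or.inr ⟨rfl, llt_append_of_not_isPrefix h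
        (fun hvu => hp (List.cons_prefix_cons.mpr ⟨rfl, hvu⟩)) x y⟩

theorem llt_append_of_length_le {u v : List X} (h : llt u v) (hl : u.length ≤ v.length)
    (x y : List X) : llt (u ++ x) (v ++ y) :=
  llt_append_of_not_isPrefix h (fun hp => llt_irrefl _ (hp.eq_of_length_le hl ▸ h)) x y

theorem llt_append_self : ∀ (u : List X) {x : List X}, x ≠ [] → llt (u ++ x) u
  | [], [], hx => absurd rfl hx
  | [], _ :: _, _ => trivial
  | _ :: u, _, hx => Or.inr ⟨rfl, llt_append_self u hx⟩

def lle (u v : List X) : Prop := llt u v ∨ u = v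

theorem lle_iff_lexKey_le {u v : List X} : lle u v ↔ lexKey u ≤ lexKey v := by
  rw [lle, llt_iff_lexKey_lt, le_iff_lt_or_eq, lexKey_injective.eq_iff]

theorem lle_refl (u : List X) : lle u u := Or.inr rfl

theorem lle_trans {u v w : List X} (h₁ : lle u v) (h₂ : lle v w) : lle u w := by
  rw [lle_iff_lexKey_le] at *
  exact h₁.trans h₂

theorem llt_of_llt_of_lle {u v w : List X} (h₁ : llt u v) (h₂ : lle v w) : llt u w := by
  rw [llt_iff_lexKey_lt, lle_iff_lexKey_le] at *
  exact h₁.trans_le h₂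

theorem llt_of_lle_of_llt {u v w : List X} (h₁ : lle u v) (h₂ : llt v w) : llt u w := by
  rw [llt_iff_lexKey_lt, lle_iff_lexKey_le] at *
  exact h₁.trans_lt h₂

theorem lle_of_not_llt {u v : List X} (h : ¬ llt u v) : lle v u := by
  rw [llt_iff_lexKey_lt, lle_iff_lexKey_le] at *
  exact not_lt.mp h

theorem lle_append {u v x y : List X} (h₁ : lle u v) (hl : u.length = v.length)
    (h₂ : lle x y) : lle (u ++ x) (v ++ y) := by
  rcases h₁ with h₁ | rfl
  · exact Or.inl (llt_append_of_length_le h₁ hl.le x y)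
  · rcases h₂ with h₂ | rfl
    · exact Or.inl ((llt_append_left_iff u).mpr h₂)
    · exact lle_refl _

theorem llt_append_of_lle {u v : List X} (h : lle u v) (hv : v ≠ []) : llt (u ++ v) v := by
  rcases h with h | rfl
  · by_cases hp : v <+: u
    · obtain ⟨r, rfl⟩ := hp
      have hr : r ≠ [] := by rintro rfl; simp [llt_irrefl] at h
      simpa using llt_append_self v (x := r ++ v) (by simp [hr])
    · simpa using llt_append_of_not_isPrefix h hp v []
  · exact llt_append_self u hv

def dlKey (u : List X) : ℕ ×ₗ (List Xᵒᵈ)ᵒᵈ := toLex (u.length, lexKey u)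

theorem dlt_iff_dlKey_lt {u v : List X} : dlt u v ↔ dlKey u < dlKey v := by
  rw [dlt, dlKey, dlKey, Prod.Lex.toLex_lt_toLex, llt_iff_lexKey_lt]

theorem dlKey_injective {α : Type*} : Function.Injective (dlKey : List α → ℕ ×ₗ (List αᵒᵈ)ᵒᵈ) :=
  fun _ _ h => lexKey_injective (congrArg (fun p => (ofLex p).2) h)

theorem eq_or_dlt_iff_dlKey_le {u v : List X} : u = v ∨ dlt u v ↔ dlKey u ≤ dlKey v := by
  rw [le_iff_eq_or_lt, dlt_iff_dlKey_lt, dlKey_injective.eq_iff]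

theorem dlKey_le_iff_lle {u v : List X} (hl : u.length = v.length) :
    dlKey u ≤ dlKey v ↔ lle u v := by
  rw [dlKey, dlKey, Prod.Lex.toLex_le_toLex, hl, lle_iff_lexKey_le]
  simp

theorem exists_eq_append_of_append_eq_append {α : Type*} {a b c d : List α} (h : a ++ b = c ++ d)
    (hl : c.length ≤ a.length) : ∃ m, a = c ++ m ∧ d = m ++ b := by
  rcases List.append_eq_append_iff.mp h with ⟨m, rfl, rfl⟩ | ⟨m, rfl, rfl⟩
  · obtain rfl : m = [] := by simpa using hl
    exact ⟨[], by simp, rfl⟩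
  · exact ⟨m, rfl, rfl⟩

theorem exists_eq_append_of_isSuffix_append {α : Type*} {s x y : List α} (h : s <:+ x ++ y)
    (hl : y.length < s.length) : ∃ s', s' <:+ x ∧ s = s' ++ y ∧ s' ≠ [] := by
  obtain ⟨t, ht⟩ := h
  have hlen := congrArg List.length ht
  simp only [List.length_append] at hlen
  obtain ⟨m, rfl, rfl⟩ := exists_eq_append_of_append_eq_append ht.symm (by omega)
  refine ⟨m, List.suffix_append t m, rfl, ?_⟩
  rintro rfl
  simp at hl

theorem isLS_singleton (x : X) : IsLS [x] := by
  refine ⟨List.cons_ne_nil x [], fun u v hu hv huv => ?_⟩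
  have := congrArg List.length huv
  simp only [List.length_append, List.length_singleton] at this
  have := List.length_pos_iff.mpr hu
  have := List.length_pos_iff.mpr hv
  omega

theorem IsLS.llt_of_isSuffix {w s : List X} (hw : IsLS w) (hs : s <:+ w) (hne : s ≠ w)
    (h0 : s ≠ []) : llt s w := by
  obtain ⟨u, rfl⟩ := hs
  have hu : u ≠ [] := by rintro rfl; exact hne rfl
  have rot := hw.2 u s hu h0 rfl
  rcases llt_trichotomy s (u ++ s) with h | h | h
  · exact h
  · exact absurd h hne
  exfalso
  by_cases hp : s <+: u ++ s
  · obtain ⟨x, hx⟩ := hp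
    have hlen := congrArg List.length hx
    simp only [List.length_append] at hlen
    have hx0 : x ≠ [] := by
      rintro rfl
      exact hu (List.eq_nil_of_length_eq_zero (by simp only [List.length_nil] at hlen; omega))
    have hux : llt u x := (llt_append_left_iff s).mp (hx ▸ rot)
    exact llt_irrefl _ (llt_trans (llt_append_of_length_le hux (by omega) s s)
      (hx ▸ hw.2 s x h0 hx0 hx.symm))
  · exact llt_irrefl _ (llt_trans (by simpa using llt_append_of_not_isPrefix h hp [] u) rot)

theorem IsLS.right_llt_left {a b : List X} (h : IsLS (a ++ b)) (ha : a ≠ []) (hb : b ≠ []) :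
    llt b a := by
  have rot := h.2 a b ha hb rfl
  rcases llt_trichotomy b a with h' | rfl | h'
  · exact h'
  · exact absurd rot (llt_irrefl _)
  by_cases hp : b <+: a
  · obtain ⟨t, rfl⟩ := hp
    have ht : t ≠ [] := by rintro rfl; simp [llt_irrefl] at rot
    have h1 : llt (b ++ t) (t ++ b) := (llt_append_left_iff b).mp (by simpa using rot)
    have h2 := h.2 b (t ++ b) hb (by simp [ht]) (List.append_assoc b t b)
    exact absurd (llt_trans h2 (llt_append_of_length_le h1 (by simp [Nat.add_comm]) b b))
      (llt_irrefl _)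
  · exact absurd (llt_append_of_not_isPrefix h' hp b a) (llt_asymm rot)

theorem llt_append_comm_of_isLS {u v : List X} (hu : u ≠ []) (hv : IsLS v) (h : llt v u) :
    llt (v ++ u) (u ++ v) := by
  by_cases hp : u <+: v
  · obtain ⟨t, rfl⟩ := hp
    have ht : t ≠ [] := by rintro rfl; simp [llt_irrefl] at h
    simpa using (llt_append_left_iff u).mpr (hv.2 u t hu ht rfl)
  · exact llt_append_of_not_isPrefix h hp u v

theorem IsLS.append {u v : List X} (hu : IsLS u) (hv : IsLS v) (h : llt v u) :
    IsLS (u ++ v) := by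
  have hv_lt : llt v (u ++ v) := by
    by_cases hp : u <+: v
    · obtain ⟨t, rfl⟩ := hp
      have ht : t ≠ [] := by rintro rfl; simp [llt_irrefl] at h
      refine (llt_append_left_iff u).mpr (hv.llt_of_isSuffix (List.suffix_append u t) ?_ ht)
      simpa using hu.1
    · simpa using llt_append_of_not_isPrefix h hp [] v
  refine ⟨by simp [hu.1], fun c d hc hd hcd => ?_⟩
  rcases le_or_gt c.length u.length with hl | hl
  · obtain ⟨m, rfl, rfl⟩ := exists_eq_append_of_append_eq_append hcd hl
    rcases eq_or_ne m [] with rfl | hm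
    · simpa using llt_append_comm_of_isLS hu.1 hv h
    · have hmu : llt m (c ++ m) :=
        hu.llt_of_isSuffix (List.suffix_append c m) (by simpa using hc) hm
      have hnp : ¬ c ++ m <+: m := fun hp => hc (by simpa using hp.length_le)
      simpa using llt_append_of_not_isPrefix hmu hnp (v ++ c) v
  · obtain ⟨m, rfl, rfl⟩ := exists_eq_append_of_append_eq_append hcd.symm hl.le
    have hm : m ≠ [] := by rintro rfl; simp at hl
    have hdv : llt d (m ++ d) := hv.llt_of_isSuffix (List.suffix_append m d) (by simpa using hm) hd
    have hnp : ¬ m ++ d <+: d := fun hp => hm (by simpa using hp.length_le)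
    simpa using llt_trans (by simpa using llt_append_of_not_isPrefix hdv hnp (u ++ m) []) hv_lt

theorem mword_ne_nil {α : Type*} : ∀ t : FreeMagma α, mword t ≠ []
  | .of _ => List.cons_ne_nil _ _
  | .mul a _ => by simp [mword, mword_ne_nil a]

theorem IsNLS.isLS : ∀ {t : FreeMagma X}, IsNLS t → IsLS (mword t)
  | .of x, _ => isLS_singleton x
  | .mul _ _, h => h.2.2.1

theorem lle_of_isSuffix_append {x b s : List X} (hb : IsLS b)
    (hx : ∀ s', s' ≠ [] → s' <:+ x → s' ≠ x → lle s' b)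
    (h0 : s ≠ []) (hs : s <:+ x ++ b) (hne : s ≠ x ++ b) : lle s b := by
  rcases le_or_gt s.length b.length with hl | hl
  · have hsb : s <:+ b := List.suffix_of_suffix_length_le hs (List.suffix_append x b) hl
    rcases eq_or_ne s b with rfl | hsb'
    · exact lle_refl _
    · exact Or.inl (hb.llt_of_isSuffix hsb hsb' h0)
  · obtain ⟨s', hs'x, rfl, hs'0⟩ := exists_eq_append_of_isSuffix_append hs hl
    exact Or.inl (llt_append_of_lle (hx s' hs'0 hs'x (fun h => hne (h ▸ rfl))) hb.1)

theorem IsNLS.lle_of_isSuffix_left : ∀ {a b : FreeMagma X}, IsNLS (.mul a b) → ∀ {s : List X},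
    s ≠ [] → s <:+ mword a → s ≠ mword a → lle s (mword b)
  | .of _, _, _, _, h0, hs, hne => by
    refine absurd (hs.eq_of_length ?_) hne
    have := hs.length_le
    have := List.length_pos_iff.mpr h0
    simp only [mword, List.length_singleton] at *
    omega
  | .mul _ a₂, _, h, _, h0, hs, hne =>
    lle_trans (lle_of_isSuffix_append h.1.2.1.isLS
        (fun _ h0' hs' hne' => IsNLS.lle_of_isSuffix_left h.1 h0' hs' hne') h0 hs hne)
      (lle_of_not_llt h.2.2.2)

theorem IsNLS.length_le_of_isSuffix {a b : FreeMagma X} (h : IsNLS (.mul a b)) {s : List X}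
    (h0 : s ≠ []) (hs : s <:+ mword a ++ mword b) (hne : s ≠ mword a ++ mword b) (hLS : IsLS s) :
    s.length ≤ (mword b).length := by
  by_contra! hgt
  obtain ⟨s', hs'a, rfl, hs'0⟩ := exists_eq_append_of_isSuffix_append hs hgt
  exact llt_irrefl _ (llt_of_llt_of_lle (hLS.right_llt_left hs'0 (mword_ne_nil b))
    (h.lle_of_isSuffix_left hs'0 hs'a (fun h' => hne (h' ▸ rfl))))

theorem IsNLS.eq_of_mword_eq : ∀ {t t' : FreeMagma X}, IsNLS t → IsNLS t' →
    mword t = mword t' → t = t'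
  | .of x, .of y, _, _, h => by rw [List.singleton_inj.mp h]
  | .of _, .mul a b, _, _, h | .mul a b, .of _, _, _, h => by
    have := List.length_pos_iff.mpr (mword_ne_nil a)
    have := List.length_pos_iff.mpr (mword_ne_nil b)
    have := congrArg List.length h
    simp only [mword, List.length_append, List.length_singleton] at this
    omega
  | .mul a b, .mul a' b', h, h', he => by
    have := List.length_pos_iff.mpr (mword_ne_nil a)
    have := List.length_pos_iff.mpr (mword_ne_nil a')
    have hlen := congrArg List.length he
    simp only [mword, List.length_append] at he hlen
    -- both `mword b` and `mword b'` are the longest proper LS suffix of the common word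
    have hbb' : (mword b).length = (mword b').length := by
      apply le_antisymm
      · refine h'.length_le_of_isSuffix (mword_ne_nil b) (he ▸ List.suffix_append _ _) ?_
          h.2.1.isLS
        intro hb; have := congrArg List.length hb; simp only [List.length_append] at this; omega
      · refine h.length_le_of_isSuffix (mword_ne_nil b') (he ▸ List.suffix_append _ _) ?_
          h'.2.1.isLS
        intro hb; have := congrArg List.length hb; simp only [List.length_append] at this; omega
    obtain ⟨haa', hbb'⟩ := List.append_inj' he hbb'
    rw [IsNLS.eq_of_mword_eq h.1 h'.1 haa', IsNLS.eq_of_mword_eq h.2.1 h'.2.1 hbb']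

section Coefficients

variable {k}

def LexBounded (f : FA k X) (w : List X) : Prop :=
  ∀ m : List X, f.coeff (FreeMonoid.ofList m) ≠ 0 → m.Perm w ∧ lle m w

theorem LexBounded.mono {f : FA k X} {w w' : List X} (h : LexBounded f w) (hp : w.Perm w')
    (hw : lle w w') : LexBounded f w' :=
  fun m hm => ⟨(h m hm).1.trans hp, lle_trans (h m hm).2 hw⟩

theorem LexBounded.sub {f g : FA k X} {w : List X} (hf : LexBounded f w) (hg : LexBounded g w) :
    LexBounded (f - g) w := by
  intro m hm
  rw [MonoidAlgebra.coeff_sub, Finsupp.sub_apply] at hm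
  by_cases hfm : f.coeff (FreeMonoid.ofList m) = 0
  · exact hg m (by simpa [hfm] using hm)
  · exact hf m hfm

theorem LexBounded.mul {A B : FA k X} {α β : List X} (hA : LexBounded A α)
    (hB : LexBounded B β) : LexBounded (A * B) (α ++ β) := by
  classical
  intro m hm
  obtain ⟨a, ha, b, hb, hab⟩ := Finset.mem_mul.mp
    (MonoidAlgebra.support_coeff_mul_subset A B (Finsupp.mem_support_iff.mpr hm))
  obtain ⟨hpa, hla⟩ := hA a.toList (Finsupp.mem_support_iff.mp ha)
  obtain ⟨hpb, hlb⟩ := hB b.toList (Finsupp.mem_support_iff.mp hb)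
  obtain rfl : m = a.toList ++ b.toList := by rw [← FreeMonoid.toList_mul, hab]; rfl
  exact ⟨hpa.append hpb, lle_append hla hpa.length_eq hlb⟩

theorem LexBounded.coeff_eq_zero {f : FA k X} {w w' : List X} (h : LexBounded f w)
    (hw : llt w w') : f.coeff (FreeMonoid.ofList w') = 0 := by
  by_contra hne
  exact llt_irrefl _ (llt_of_lle_of_llt (h w' hne).2 hw)

theorem LexBounded.coeff_mul {A B : FA k X} {α β : List X} (hA : LexBounded A α) :
    (A * B).coeff (FreeMonoid.ofList (α ++ β)) =
      A.coeff (FreeMonoid.ofList α) * B.coeff (FreeMonoid.ofList β) := by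
  refine MonoidAlgebra.coeff_mul_mul_of_uniqueMul fun a b ha hb hab => ?_
  have hpa := (hA a.toList (Finsupp.mem_support_iff.mp ha)).1
  have hab' : a.toList ++ b.toList = α ++ β := congrArg FreeMonoid.toList hab
  exact ⟨congrArg FreeMonoid.ofList (List.append_inj hab' hpa.length_eq).1,
    congrArg FreeMonoid.ofList (List.append_inj hab' hpa.length_eq).2⟩

theorem evalM_mul {α : Type*} (a b : FreeMagma α) : evalM k (.mul a b) = ⁅evalM k a, evalM k b⁆ :=
  (Ring.lie_def _ _).symm

theorem lexBounded_evalM_of (x : X) : LexBounded (evalM k (.of x)) [x] := by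
  classical
  intro m hm
  rw [evalM, MonoidAlgebra.coeff_single, Finsupp.single_apply, ite_ne_right_iff] at hm
  obtain rfl : m = [x] := (congrArg FreeMonoid.toList hm.1).symm
  exact ⟨List.Perm.refl _, lle_refl _⟩

theorem lexBounded_evalM_mul {a b : FreeMagma X} (ha : LexBounded (evalM k a) (mword a))
    (hb : LexBounded (evalM k b) (mword b)) (h : llt (mword b ++ mword a) (mword a ++ mword b)) :
    LexBounded (evalM k (.mul a b)) (mword a ++ mword b) :=
  (ha.mul hb).sub ((hb.mul ha).mono List.perm_append_comm (Or.inl h))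

theorem coeff_evalM_mul {a b : FreeMagma X} (ha : LexBounded (evalM k a) (mword a))
    (hb : LexBounded (evalM k b) (mword b)) (h : llt (mword b ++ mword a) (mword a ++ mword b)) :
    (evalM k (.mul a b)).coeff (FreeMonoid.ofList (mword a ++ mword b)) =
      (evalM k a).coeff (FreeMonoid.ofList (mword a)) *
        (evalM k b).coeff (FreeMonoid.ofList (mword b)) := by
  rw [evalM, MonoidAlgebra.coeff_sub, Finsupp.sub_apply, ha.coeff_mul, (hb.mul ha).coeff_eq_zero h,
    sub_zero]

theorem IsNLS.lexBounded_evalM : ∀ {t : FreeMagma X}, IsNLS t → LexBounded (evalM k t) (mword t)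
  | .of x, _ => lexBounded_evalM_of x
  | .mul a b, h => lexBounded_evalM_mul h.1.lexBounded_evalM h.2.1.lexBounded_evalM
      (h.2.2.1.2 _ _ (mword_ne_nil a) (mword_ne_nil b) rfl)

theorem IsNLS.coeff_evalM : ∀ {t : FreeMagma X}, IsNLS t →
    (evalM k t).coeff (FreeMonoid.ofList (mword t)) = 1
  | .of x, _ => by simp [evalM, mword]
  | .mul a b, h => by
    rw [mword, coeff_evalM_mul h.1.lexBounded_evalM h.2.1.lexBounded_evalM
      (h.2.2.1.2 _ _ (mword_ne_nil a) (mword_ne_nil b) rfl), h.1.coeff_evalM, h.2.1.coeff_evalM,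
      one_mul]

theorem lexBounded_lie_evalM {p q : FreeMagma X} (hp : IsNLS p) (hq : IsNLS q)
    (h : llt (mword q) (mword p)) :
    LexBounded ⁅evalM k p, evalM k q⁆ (mword p ++ mword q) := by
  rw [← evalM_mul]
  exact lexBounded_evalM_mul hp.lexBounded_evalM hq.lexBounded_evalM
    (llt_append_comm_of_isLS (mword_ne_nil p) hq.isLS h)

end Coefficients

theorem lie_mem_span_of_forall {R L : Type*} [CommRing R] [LieRing L] [LieAlgebra R L]
    {S T U : Set L} {x y : L} (hx : x ∈ Submodule.span R S) (hy : y ∈ Submodule.span R T)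
    (h : ∀ a ∈ S, ∀ b ∈ T, ⁅a, b⁆ ∈ Submodule.span R U) : ⁅x, y⁆ ∈ Submodule.span R U := by
  have hle : Submodule.map₂ (LieModule.toEnd R L L : L →ₗ[R] Module.End R L)
      (Submodule.span R S) (Submodule.span R T) ≤ Submodule.span R U := by
    rw [Submodule.map₂_span_span, Submodule.span_le]
    rintro _ ⟨a, ha, b, hb, rfl⟩
    exact h a ha b hb
  exact hle (Submodule.apply_mem_map₂ _ hx hy)

def nlsSpan (z : List X) : Submodule k (FA k X) :=
  Submodule.span k (evalM k '' {s | IsNLS s ∧ (mword s).Perm z})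

theorem nlsSpan_congr {z z' : List X} (h : z.Perm z') : nlsSpan k z = nlsSpan k z' := by
  have hz : ∀ s : FreeMagma X, (mword s).Perm z ↔ (mword s).Perm z' :=
    fun _ => ⟨(·.trans h), (·.trans h.symm)⟩
  simp only [nlsSpan, hz]

theorem IsNLS.evalM_mem_nlsSpan {t : FreeMagma X} (h : IsNLS t) : evalM k t ∈ nlsSpan k (mword t) :=
  Submodule.subset_span ⟨t, ⟨h, List.Perm.refl _⟩, rfl⟩

def nlsBelow (x : List X) : Set (FreeMagma X) :=
  {s | IsNLS s ∧ (mword s).Perm x ∧ lle (mword s) x}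

section Leading

variable {k}

theorem IsLeading.unique {f : FA k X} {w w' : List X} (h : IsLeading k f w)
    (h' : IsLeading k f w') : w = w' :=
  dlKey_injective <| le_antisymm (eq_or_dlt_iff_dlKey_le.mp (h'.2 w h.1))
    (eq_or_dlt_iff_dlKey_le.mp (h.2 w' h'.1))

theorem coeff_linearCombination_evalM {α : Type*} (l : FreeMagma α →₀ k) (v : FreeMonoid α) :
    (Finsupp.linearCombination k (evalM k) l).coeff v =
      ∑ s ∈ l.support, l s * (evalM k s).coeff v := by
  simp [Finsupp.linearCombination_apply, Finsupp.sum, MonoidAlgebra.coeff_sum]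

theorem exists_isLeading_linearCombination {l : FreeMagma X →₀ k}
    (hl : ∀ s ∈ l.support, IsNLS s) (hne : l.support.Nonempty) :
    ∃ s₀ ∈ l.support, (∀ s ∈ l.support, dlKey (mword s) ≤ dlKey (mword s₀)) ∧
      IsLeading k (Finsupp.linearCombination k (evalM k) l) (mword s₀) := by
  obtain ⟨s₀, hs₀, hmax⟩ := l.support.exists_max_image (fun s => dlKey (mword s)) hne
  have hbound : ∀ s ∈ l.support, ∀ v, (evalM k s).coeff (FreeMonoid.ofList v) ≠ 0 →
      dlKey v ≤ dlKey (mword s) := fun s hs v hv =>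
    have h := (hl s hs).lexBounded_evalM v hv
    (dlKey_le_iff_lle h.1.length_eq).mpr h.2
  refine ⟨s₀, hs₀, hmax, ?_, fun v hv => ?_⟩
  · rw [coeff_linearCombination_evalM, Finset.sum_eq_single s₀, (hl s₀ hs₀).coeff_evalM, mul_one]
    · exact Finsupp.mem_support_iff.mp hs₀
    · intro s hs hs₀'
      refine mul_eq_zero_of_right _ (by_contra fun hc => hs₀' ?_)
      exact (hl s hs).eq_of_mword_eq (hl s₀ hs₀) (dlKey_injective
        (le_antisymm (hmax s hs) (hbound s hs _ hc)))
    · exact fun h => absurd hs₀ h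
  · rw [coeff_linearCombination_evalM] at hv
    obtain ⟨s, hs, hsv⟩ := Finset.exists_ne_zero_of_sum_ne_zero hv
    exact eq_or_dlt_iff_dlKey_le.mpr ((hbound s hs v (right_ne_zero_of_mul hsv)).trans (hmax s hs))

theorem mem_span_nlsBelow {g : FA k X} {x : List X} (hg : g ∈ nlsSpan k x)
    (hb : LexBounded g x) : g ∈ Submodule.span k (evalM k '' nlsBelow x) := by
  obtain ⟨l, hl, rfl⟩ := (Finsupp.mem_span_image_iff_linearCombination k).mp hg
  refine (Finsupp.mem_span_image_iff_linearCombination k).mpr ⟨l, fun s hs => ?_, rfl⟩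
  have hsupp : ∀ s ∈ l.support, IsNLS s ∧ (mword s).Perm x := fun s hs => hl hs
  obtain ⟨s₀, hs₀, hmax, hlead⟩ :=
    exists_isLeading_linearCombination (fun s hs => (hsupp s hs).1) ⟨s, hs⟩
  refine ⟨(hsupp s hs).1, (hsupp s hs).2, lle_trans ?_ (hb _ hlead.1).2⟩
  exact (dlKey_le_iff_lle ((hsupp s hs).2.length_eq.trans (hsupp s₀ hs₀).2.length_eq.symm)).mp
    (hmax s hs)

end Leading

def lexRank (z : List X) : ℕ :=
  (z.permutations.toFinset.filter fun w => lexKey w ≤ lexKey z).card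

theorem lexRank_lt_lexRank {z z' : List X} (hperm : z'.Perm z) (hlt : llt z' z) :
    lexRank z' < lexRank z := by
  rw [llt_iff_lexKey_lt] at hlt
  refine Finset.card_lt_card ((Finset.ssubset_iff_of_subset fun w hw => ?_).mpr ⟨z, ?_, ?_⟩)
  · simp only [Finset.mem_filter, List.mem_toFinset, List.mem_permutations] at hw ⊢
    exact ⟨hw.1.trans hperm, hw.2.trans hlt.le⟩
  · simp
  · simpa using fun _ => hlt

def bracketMeasure (p q : FreeMagma X) : ℕ ×ₗ ℕ ×ₗ ℕ :=
  toLex ((mword p ++ mword q).length, toLex (lexRank (mword p ++ mword q), (mword p).length))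

theorem bracketMeasure_lt_of_length_lt {p q r s : FreeMagma X}
    (h : (mword r ++ mword s).length < (mword p ++ mword q).length) :
    bracketMeasure r s < bracketMeasure p q :=
  Prod.Lex.toLex_lt_toLex.mpr (Or.inl h)

theorem bracketMeasure_lt_of_llt {p q r s : FreeMagma X}
    (hperm : (mword r ++ mword s).Perm (mword p ++ mword q))
    (h : llt (mword r ++ mword s) (mword p ++ mword q)) :
    bracketMeasure r s < bracketMeasure p q :=
  Prod.Lex.toLex_lt_toLex.mpr
    (Or.inr ⟨hperm.length_eq, Prod.Lex.toLex_lt_toLex.mpr (Or.inl (lexRank_lt_lexRank hperm h))⟩)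

theorem bracketMeasure_lt_of_eq {p q r s : FreeMagma X}
    (h : mword r ++ mword s = mword p ++ mword q) (hl : (mword r).length < (mword p).length) :
    bracketMeasure r s < bracketMeasure p q := by
  rw [bracketMeasure, bracketMeasure, h]
  exact Prod.Lex.toLex_lt_toLex.mpr (Or.inr ⟨rfl, Prod.Lex.toLex_lt_toLex.mpr (Or.inr ⟨rfl, hl⟩)⟩)

theorem lie_evalM_mem_nlsSpan_of_forall_llt {r s : FreeMagma X} (hr : IsNLS r) (hs : IsNLS s)
    (h₁ : llt (mword s) (mword r) → ⁅evalM k r, evalM k s⁆ ∈ nlsSpan k (mword r ++ mword s))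
    (h₂ : llt (mword r) (mword s) → ⁅evalM k s, evalM k r⁆ ∈ nlsSpan k (mword s ++ mword r)) :
    ⁅evalM k r, evalM k s⁆ ∈ nlsSpan k (mword r ++ mword s) := by
  rcases llt_trichotomy (mword s) (mword r) with h | h | h
  · exact h₁ h
  · rw [hs.eq_of_mword_eq hr h, lie_self]
    exact zero_mem _
  · rw [← lie_skew, nlsSpan_congr k List.perm_append_comm]
    exact neg_mem (h₂ h)

def ReducedBelow (p q : FreeMagma X) : Prop :=
  ∀ r s : FreeMagma X, IsNLS r → IsNLS s → llt (mword s) (mword r) →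
    bracketMeasure r s < bracketMeasure p q →
    ⁅evalM k r, evalM k s⁆ ∈ nlsSpan k (mword r ++ mword s)

namespace ReducedBelow

variable {k} {p q : FreeMagma X}

theorem lie_evalM_mem_of_perm (H : ReducedBelow k p q) {r s : FreeMagma X} (hr : IsNLS r)
    (hs : IsNLS s)
    (hperm : (mword r ++ mword s).Perm (mword p ++ mword q))
    (h₁ : llt (mword s) (mword r) → bracketMeasure r s < bracketMeasure p q)
    (h₂ : llt (mword r) (mword s) → bracketMeasure s r < bracketMeasure p q) :
    ⁅evalM k r, evalM k s⁆ ∈ nlsSpan k (mword p ++ mword q) := by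
  rw [← nlsSpan_congr k hperm]
  exact lie_evalM_mem_nlsSpan_of_forall_llt k hr hs (fun h => H r s hr hs h (h₁ h))
    (fun h => H s r hs hr h (h₂ h))

theorem lie_evalM_mem_span_nlsBelow (H : ReducedBelow k p q) {r s : FreeMagma X} (hr : IsNLS r)
    (hs : IsNLS s) (hsr : llt (mword s) (mword r))
    (hlen : (mword r ++ mword s).length < (mword p ++ mword q).length) :
    ⁅evalM k r, evalM k s⁆ ∈ Submodule.span k (evalM k '' nlsBelow (mword r ++ mword s)) :=
  mem_span_nlsBelow (H r s hr hs hsr (bracketMeasure_lt_of_length_lt hlen))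
    (lexBounded_lie_evalM hr hs hsr)

theorem lie_evalM_right_mem (H : ReducedBelow k p q) {y : FreeMagma X} (hy : IsNLS y)
    {x : List X} {g : FA k X} (hg : g ∈ Submodule.span k (evalM k '' nlsBelow x))
    (hperm : (x ++ mword y).Perm (mword p ++ mword q))
    (h₁ : llt (x ++ mword y) (mword p ++ mword q)) (h₂ : llt (mword y ++ x) (mword p ++ mword q)) :
    ⁅g, evalM k y⁆ ∈ nlsSpan k (mword p ++ mword q) := by
  refine lie_mem_span_of_forall hg (Submodule.subset_span (Set.mem_singleton (evalM k y))) ?_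
  rintro _ ⟨s, ⟨hs, hsx, hsle⟩, rfl⟩ _ rfl
  have hperm₁ : (mword s ++ mword y).Perm (mword p ++ mword q) := (hsx.append_right _).trans hperm
  have hperm₂ : (mword y ++ mword s).Perm (mword p ++ mword q) :=
    List.perm_append_comm.trans hperm₁
  exact H.lie_evalM_mem_of_perm hs hy hperm₁
    (fun _ => bracketMeasure_lt_of_llt hperm₁
      (llt_of_lle_of_llt (lle_append hsle hsx.length_eq (lle_refl _)) h₁))
    (fun _ => bracketMeasure_lt_of_llt hperm₂
      (llt_of_lle_of_llt (lle_append (lle_refl _) rfl hsle) h₂))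

theorem lie_evalM_left_mem {p₁ p₂ : FreeMagma X} (H : ReducedBelow k (.mul p₁ p₂) q)
    (hp : IsNLS (.mul p₁ p₂)) (hz : IsLS (mword p₁ ++ mword p₂ ++ mword q)) {g : FA k X}
    (hg : g ∈ Submodule.span k (evalM k '' nlsBelow (mword p₂ ++ mword q))) :
    ⁅evalM k p₁, g⁆ ∈ nlsSpan k (mword p₁ ++ mword p₂ ++ mword q) := by
  refine lie_mem_span_of_forall (Submodule.subset_span (Set.mem_singleton (evalM k p₁))) hg ?_
  rintro _ rfl _ ⟨s, ⟨hs, hsx, hsle⟩, rfl⟩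
  have hperm₁ : (mword p₁ ++ mword s).Perm (mword p₁ ++ mword p₂ ++ mword q) := by
    simpa using hsx.append_left (mword p₁)
  have hperm₂ : (mword s ++ mword p₁).Perm (mword p₁ ++ mword p₂ ++ mword q) :=
    List.perm_append_comm.trans hperm₁
  refine H.lie_evalM_mem_of_perm hp.1 hs hperm₁ (fun _ => ?_) (fun _ => ?_)
  · rcases hsle with hlt | heq
    · have h := (llt_append_left_iff (mword p₁)).mpr hlt
      rw [← List.append_assoc] at h
      exact bracketMeasure_lt_of_llt hperm₁ h
    · refine bracketMeasure_lt_of_eq (by simp [mword, heq]) ?_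
      simpa [mword] using List.length_pos_iff.mpr (mword_ne_nil p₂)
  · have hrot := hz.2 (mword p₁) (mword p₂ ++ mword q) (mword_ne_nil p₁) (by simp [mword_ne_nil])
      (List.append_assoc _ _ _)
    exact bracketMeasure_lt_of_llt hperm₂
      (llt_of_lle_of_llt (lle_append hsle hsx.length_eq (lle_refl _)) hrot)

theorem lie_evalM_mem_of_llt_right {p₁ p₂ : FreeMagma X} (H : ReducedBelow k (.mul p₁ p₂) q)
    (hp : IsNLS (.mul p₁ p₂)) (hq : IsNLS q) (hqp : llt (mword q) (mword (.mul p₁ p₂)))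
    (hc : llt (mword q) (mword p₂)) :
    ⁅evalM k (.mul p₁ p₂), evalM k q⁆ ∈ nlsSpan k (mword p₁ ++ mword p₂ ++ mword q) := by
  have hz : IsLS (mword p₁ ++ mword p₂ ++ mword q) := hp.isLS.append hq.isLS hqp
  have hne₁ := mword_ne_nil p₁
  have hne₂ := mword_ne_nil p₂
  have := List.length_pos_iff.mpr hne₁
  have := List.length_pos_iff.mpr hne₂
  rw [evalM_mul, lie_lie, sub_eq_add_neg]
  refine add_mem (H.lie_evalM_left_mem hp hz
    (H.lie_evalM_mem_span_nlsBelow hp.2.1 hq hc (by simp [mword]; omega))) ?_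
  rw [lie_skew]
  rcases llt_trichotomy (mword q) (mword p₁) with h | h | h
  · refine H.lie_evalM_right_mem hp.2.1
      (H.lie_evalM_mem_span_nlsBelow hp.1 hq h (by simp [mword]; omega)) ?_ ?_ ?_
    · simpa [mword] using List.perm_append_comm.append_left (mword p₁)
    · simpa [mword] using
        (llt_append_left_iff (mword p₁)).mpr (llt_append_comm_of_isLS hne₂ hq.isLS hc)
    · simpa [mword] using llt_append_of_length_le (hp.isLS.2 _ _ hne₁ hne₂ rfl)
        (by simp [mword, Nat.add_comm]) (mword q) (mword q)
  · rw [hq.eq_of_mword_eq hp.1 h, lie_self, zero_lie]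
    exact zero_mem _
  · rw [← lie_skew (evalM k p₁) (evalM k q), neg_lie]
    refine neg_mem (H.lie_evalM_right_mem hp.2.1
      (H.lie_evalM_mem_span_nlsBelow hq hp.1 h (by simp [mword]; omega)) ?_ ?_ ?_)
    · simpa [mword] using (List.perm_append_comm (l₁ := mword q) (l₂ := mword p₁ ++ mword p₂))
    · simpa [mword] using
        hz.2 (mword p₁ ++ mword p₂) (mword q) (by simp [hne₁]) (mword_ne_nil q) rfl
    · simpa [mword] using hz.2 (mword p₁) (mword p₂ ++ mword q) hne₁ (by simp [hne₂])
        (List.append_assoc _ _ _)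

theorem lie_evalM_mem {p : FreeMagma X} (H : ReducedBelow k p q) (hp : IsNLS p) (hq : IsNLS q)
    (hqp : llt (mword q) (mword p)) : ⁅evalM k p, evalM k q⁆ ∈ nlsSpan k (mword p ++ mword q) := by
  have hpq : IsLS (mword p ++ mword q) := hp.isLS.append hq.isLS hqp
  rw [← evalM_mul]
  cases p with
  | of x => exact IsNLS.evalM_mem_nlsSpan k (t := .mul (.of x) q) ⟨trivial, hq, hpq, trivial⟩
  | mul p₁ p₂ =>
    by_cases hc : llt (mword q) (mword p₂)
    · rw [evalM_mul]
      exact H.lie_evalM_mem_of_llt_right hp hq hqp hc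
    · exact IsNLS.evalM_mem_nlsSpan k (t := .mul (.mul p₁ p₂) q) ⟨hp, hq, hpq, hc⟩

end ReducedBelow

theorem lie_evalM_mem_nlsSpan_of_llt {p q : FreeMagma X} (hp : IsNLS p) (hq : IsNLS q)
    (hqp : llt (mword q) (mword p)) : ⁅evalM k p, evalM k q⁆ ∈ nlsSpan k (mword p ++ mword q) := by
  obtain ⟨μ, hμ⟩ : ∃ μ, bracketMeasure p q = μ := ⟨_, rfl⟩
  induction μ using WellFoundedLT.induction generalizing p q with
  | _ μ ih =>
    exact ReducedBelow.lie_evalM_mem (fun r s hr hs hsr hlt => ih _ (hμ ▸ hlt) hr hs hsr rfl)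
      hp hq hqp

theorem lie_evalM_mem_nlsSpan {r s : FreeMagma X} (hr : IsNLS r) (hs : IsNLS s) :
    ⁅evalM k r, evalM k s⁆ ∈ nlsSpan k (mword r ++ mword s) :=
  lie_evalM_mem_nlsSpan_of_forall_llt k hr hs (lie_evalM_mem_nlsSpan_of_llt k hr hs)
    (lie_evalM_mem_nlsSpan_of_llt k hs hr)

def nlsLieSubalgebra : LieSubalgebra k (FA k X) :=
  { Submodule.span k (evalM k '' {s | IsNLS s}) with
    lie_mem' := fun hx hy => lie_mem_span_of_forall hx hy <| by
      rintro _ ⟨r, hr, rfl⟩ _ ⟨s, hs, rfl⟩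
      exact Submodule.span_mono (Set.image_mono fun _ ht => ht.1) (lie_evalM_mem_nlsSpan k hr hs) }

theorem lieSpan_gens_le_nlsLieSubalgebra :
    LieSubalgebra.lieSpan k (FA k X) (gens k) ≤ nlsLieSubalgebra k :=
  LieSubalgebra.lieSpan_le.mpr (by
    rintro _ ⟨x, rfl⟩
    exact Submodule.subset_span ⟨.of x, trivial, rfl⟩)

/-- For every nonzero Lie element `f` of the free associative algebra (an element
of the Lie subalgebra generated by X under commutators), the deg-lex leading
monomial of `f` is an associative Lyndon--Shirshov word. -/
theorem stmt_6 (f : FA k X) (hf : f ∈ LieSubalgebra.lieSpan k (FA k X) (gens k))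
    (hf0 : f ≠ 0) (w : List X) (hw : IsLeading k f w) : IsLS w := by
  obtain ⟨l, hl, rfl⟩ :=
    (Finsupp.mem_span_image_iff_linearCombination k).mp (lieSpan_gens_le_nlsLieSubalgebra k hf)
  have hne : l.support.Nonempty := by
    rw [Finsupp.support_nonempty_iff]
    rintro rfl
    exact hf0 (map_zero _)
  obtain ⟨s₀, hs₀, -, hlead⟩ := exists_isLeading_linearCombination (fun s hs => hl hs) hne
  rw [hw.unique hlead]
  exact (hl hs₀).isLS
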